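/- The function F₁(x₀,p₀,x₁,p₁,x₂,p₂) = (x₁-x₂)√(p₁p₂) + (x₂-x₀)√(p₂p₀) + (x₀-x₁)√(p₀p₁) is a common first integral of the diagonal prolongations of X₁, X₂, X₃, X₄, X₅ to three copies of O = {p < 0}; that is, the derivative of F₁ along each prolonged vector field vanishes identically. -/

import Mathlib

/-!
In the coordinate `s = √(-p)` each summand `(xᵢ - xⱼ) sᵢ sⱼ` of `F₁` has, along the prolongation
of `X`, derivative `φ(zⱼ) - φ(zᵢ)` for a potential `φ` depending on `X` alone: `φ = s` for `X₁`,
`φ = x s` for `X₅` and `φ = 0` for `X₂, X₃, X₄`. Summed over the cyclic pairs of `F₁` these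
differences telescope to zero.
-/

open Real

/-- The half-plane `O = {(x,p) : p < 0}`. -/
def O : Set (ℝ × ℝ) := {z | z.2 < 0}

/-- Lie bracket of vector fields on `ℝ²`: `[V,W] = DW·V - DV·W`. -/
noncomputable def bracket (V W : ℝ × ℝ → ℝ × ℝ) (z : ℝ × ℝ) : ℝ × ℝ :=
  fderiv ℝ W z (V z) - fderiv ℝ V z (W z)

noncomputable def X₁ : ℝ × ℝ → ℝ × ℝ := fun z => (1 / Real.sqrt (-z.2), 0)
def X₂ : ℝ × ℝ → ℝ × ℝ := fun _ => (1, 0)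
def X₃ : ℝ × ℝ → ℝ × ℝ := fun z => (z.1, -z.2)
def X₄ : ℝ × ℝ → ℝ × ℝ := fun z => (z.1 ^ 2, -2 * z.1 * z.2)
noncomputable def X₅ : ℝ × ℝ → ℝ × ℝ :=
  fun z => (z.1 / Real.sqrt (-z.2), 2 * Real.sqrt (-z.2))

noncomputable def XF : Fin 5 → (ℝ × ℝ → ℝ × ℝ) := ![X₁, X₂, X₃, X₄, X₅]

/-- First integral `F₁` on `O³`. -/
noncomputable def F₁ (z : Fin 3 → ℝ × ℝ) : ℝ :=
  ((z 1).1 - (z 2).1) * (Real.sqrt (-(z 1).2) * Real.sqrt (-(z 2).2)) +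
  ((z 2).1 - (z 0).1) * (Real.sqrt (-(z 2).2) * Real.sqrt (-(z 0).2)) +
  ((z 0).1 - (z 1).1) * (Real.sqrt (-(z 0).2) * Real.sqrt (-(z 1).2))

noncomputable def pairTerm (w : (ℝ × ℝ) × (ℝ × ℝ)) : ℝ :=
  (w.1.1 - w.2.1) * (Real.sqrt (-w.1.2) * Real.sqrt (-w.2.2))

lemma hasFDerivAt_sqrt_neg_snd {a : ℝ × ℝ} (ha : a.2 < 0) :
    HasFDerivAt (fun a : ℝ × ℝ => Real.sqrt (-a.2))
      ((1 / (2 * Real.sqrt (-a.2))) • -ContinuousLinearMap.snd ℝ ℝ ℝ) a :=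
  (Real.hasDerivAt_sqrt (by linarith)).comp_hasFDerivAt a
    (-ContinuousLinearMap.snd ℝ ℝ ℝ).hasFDerivAt

lemma differentiableAt_pairTerm {a b : ℝ × ℝ} (ha : a.2 < 0) (hb : b.2 < 0) :
    DifferentiableAt ℝ pairTerm (a, b) := by
  unfold pairTerm
  fun_prop (disch := simp [ha.ne, hb.ne])

lemma fderiv_pairTerm_apply {a b : ℝ × ℝ} (ha : a.2 < 0) (hb : b.2 < 0) (u v : ℝ × ℝ) :
    fderiv ℝ pairTerm (a, b) (u, v) =
      (u.1 - v.1) * (Real.sqrt (-a.2) * Real.sqrt (-b.2)) -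
        (a.1 - b.1) * (u.2 * Real.sqrt (-b.2) / (2 * Real.sqrt (-a.2)) +
          Real.sqrt (-a.2) * v.2 / (2 * Real.sqrt (-b.2))) := by
  have hx := (hasFDerivAt_fst (𝕜 := ℝ) (p := (a, b))).fst.sub hasFDerivAt_snd.fst
  have hsa := (hasFDerivAt_sqrt_neg_snd ha).comp (a, b) (hasFDerivAt_fst (𝕜 := ℝ) (p := (a, b)))
  have hsb := (hasFDerivAt_sqrt_neg_snd hb).comp (a, b) (hasFDerivAt_snd (𝕜 := ℝ) (p := (a, b)))
  have h : HasFDerivAt pairTerm _ (a, b) := hx.mul (hsa.mul hsb)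
  rw [h.fderiv]
  have hsa_pos := Real.sqrt_pos.2 (neg_pos.2 ha)
  have hsb_pos := Real.sqrt_pos.2 (neg_pos.2 hb)
  simp only [Pi.sub_apply, Function.comp_apply, add_apply, sub_apply, neg_apply, smul_apply,
    ContinuousLinearMap.comp_apply, ContinuousLinearMap.coe_fst', ContinuousLinearMap.coe_snd',
    smul_eq_mul]
  field_simp
  ring

lemma fderiv_F₁_apply {z : Fin 3 → ℝ × ℝ} (hz : ∀ i, (z i).2 < 0) (v : Fin 3 → ℝ × ℝ) :
    fderiv ℝ F₁ z v =
      fderiv ℝ pairTerm (z 1, z 2) (v 1, v 2) + fderiv ℝ pairTerm (z 2, z 0) (v 2, v 0) +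
        fderiv ℝ pairTerm (z 0, z 1) (v 0, v 1) := by
  have hpair (i j : Fin 3) :=
    (differentiableAt_pairTerm (hz i) (hz j)).hasFDerivAt.comp z
      ((hasFDerivAt_apply (𝕜 := ℝ) i z).prodMk (hasFDerivAt_apply j z))
  have h : HasFDerivAt F₁ _ z := ((hpair 1 2).add (hpair 2 0)).add (hpair 0 1)
  rw [h.fderiv]
  rfl

lemma exists_eq_neg_sq_of_snd_neg {a : ℝ × ℝ} (ha : a.2 < 0) : ∃ s > 0, a = (a.1, -s ^ 2) :=
  ⟨Real.sqrt (-a.2), Real.sqrt_pos.2 (neg_pos.2 ha), by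
    rw [Real.sq_sqrt (neg_nonneg.2 ha.le), neg_neg]⟩

lemma exists_fderiv_pairTerm_eq_sub {X : ℝ × ℝ → ℝ × ℝ}
    (hX : X ∈ ({X₁, X₂, X₃, X₄, X₅} : Set (ℝ × ℝ → ℝ × ℝ))) :
    ∃ φ : ℝ × ℝ → ℝ, ∀ a b : ℝ × ℝ, a.2 < 0 → b.2 < 0 →
      fderiv ℝ pairTerm (a, b) (X a, X b) = φ b - φ a := by
  suffices ∃ φ : ℝ × ℝ → ℝ, ∀ x y s t : ℝ, 0 < s → 0 < t →
      fderiv ℝ pairTerm ((x, -s ^ 2), (y, -t ^ 2)) (X (x, -s ^ 2), X (y, -t ^ 2)) =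
        φ (y, -t ^ 2) - φ (x, -s ^ 2) by
    obtain ⟨φ, hφ⟩ := this
    refine ⟨φ, fun a b ha hb => ?_⟩
    obtain ⟨s, hs, ha⟩ := exists_eq_neg_sq_of_snd_neg ha
    obtain ⟨t, ht, hb⟩ := exists_eq_neg_sq_of_snd_neg hb
    rw [ha, hb]
    exact hφ _ _ s t hs ht
  have hsq {s : ℝ} (hs : 0 < s) : Real.sqrt (-(-s ^ 2)) = s := by
    rw [neg_neg, Real.sqrt_sq hs.le]
  simp only [Set.mem_insert_iff, Set.mem_singleton_iff] at hX
  rcases hX with rfl | rfl | rfl | rfl | rfl <;>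
    [use fun a => Real.sqrt (-a.2); use fun _ => 0; use fun _ => 0; use fun _ => 0;
      use fun a => a.1 * Real.sqrt (-a.2)]
  all_goals
    intro x y s t hs ht
    rw [fderiv_pairTerm_apply (neg_neg_of_pos (pow_pos hs 2)) (neg_neg_of_pos (pow_pos ht 2))]
    simp only [X₁, X₂, X₃, X₄, X₅, hsq hs, hsq ht]
    field_simp
    ring

/-- `F₁` is a common first integral of the diagonal prolongations
of `X₁,…,X₅` to `O³`: the derivative of `F₁` along each prolonged vector field
`X̃ z = (i ↦ X (z i))` vanishes identically on `O³`. -/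
theorem F1_first_integral :
    ∀ X ∈ ({X₁, X₂, X₃, X₄, X₅} : Set (ℝ × ℝ → ℝ × ℝ)),
      ∀ z : Fin 3 → ℝ × ℝ, (∀ i, (z i).2 < 0) →
        fderiv ℝ F₁ z (fun i => X (z i)) = 0 := by
  intro X hX z hz
  obtain ⟨φ, hφ⟩ := exists_fderiv_pairTerm_eq_sub hX
  rw [fderiv_F₁_apply hz, hφ _ _ (hz 1) (hz 2), hφ _ _ (hz 2) (hz 0), hφ _ _ (hz 0) (hz 1)]
  ring
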